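/- arXiv:1403.8076 — 5 statements merged into one kernel-verified Lean document; each statement's English description precedes it below -/
import Mathlib

section
/- Let n ≥ 1 and let S_n(Sym_n) be the monoid presented by generators x_1,…,x_n and relations x_{σ(1)}x_{σ(2)}⋯x_{σ(n)} = x_1x_2⋯x_n for all σ ∈ Sym_n. Then the element x_ε = x_1x_2⋯x_n is central in S_n(Sym_n); in particular x_i·x_ε = x_ε·x_i holds in S_n(Sym_n) for every 1 ≤ i ≤ n. -/
/-- The word `x_{σ(1)} x_{σ(2)} ⋯ x_{σ(n)}` in the free monoid on `n` generators
(generator `x_j` is indexed by `j-1 : Fin n`). -/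
def permWord {n : ℕ} (σ : Equiv.Perm (Fin n)) : FreeMonoid (Fin n) :=
  FreeMonoid.ofList (List.ofFn fun i => σ i)

/-- The word `x_ε = x_1 x_2 ⋯ x_n`. -/
def epsWord (n : ℕ) : FreeMonoid (Fin n) :=
  FreeMonoid.ofList (List.ofFn fun i : Fin n => i)

/-- The defining relations `x_{σ(1)} ⋯ x_{σ(n)} = x_1 ⋯ x_n`, `σ ∈ Sym_n`. -/
def symRel (n : ℕ) : FreeMonoid (Fin n) → FreeMonoid (Fin n) → Prop :=
  fun a b => ∃ σ : Equiv.Perm (Fin n), a = permWord σ ∧ b = epsWord n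

/-- The canonical projection from the free monoid onto `S_n(Sym_n)`. -/
def proj (n : ℕ) : FreeMonoid (Fin n) →* PresentedMonoid (symRel n) :=
  PresentedMonoid.mk (symRel n)

/-- `u` contains a subword of the form `x_{σ(1)} ⋯ x_{σ(n)}` for some `σ ∈ Sym_n`. -/
def HasPermSubword {n : ℕ} (u : FreeMonoid (Fin n)) : Prop :=
  ∃ (σ : Equiv.Perm (Fin n)) (a b : FreeMonoid (Fin n)), u = a * permWord σ * b

/-- The word `x_1^{m_1} · x_ε · x_2^{m_2} ⋯ x_n^{m_n}` (0-indexed: `m i` is the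
exponent of generator `i`). -/
def normalWord (n : ℕ) (h : 0 < n) (m : Fin n → ℕ) : FreeMonoid (Fin n) :=
  FreeMonoid.ofList (List.replicate (m ⟨0, h⟩) ⟨0, h⟩) * epsWord n *
    FreeMonoid.ofList (((List.finRange n).drop 1).flatMap fun i => List.replicate (m i) i)

lemma exists_permWord_eq_ofList {n : ℕ} {l : List (Fin n)} (h : l.Perm (List.finRange n)) :
    ∃ σ : Equiv.Perm (Fin n), permWord σ = FreeMonoid.ofList l := by
  have hlen : l.length = n := by simpa using h.length_eq
  have hnd : l.Nodup := h.nodup_iff.2 (List.nodup_finRange n)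
  refine ⟨(finCongr hlen.symm).trans
    (hnd.getEquivOfForallMemList l fun x => h.mem_iff.2 (List.mem_finRange x)), ?_⟩
  exact congrArg FreeMonoid.ofList ((List.ofFn_congr hlen l.get).symm.trans (List.ofFn_get l))

lemma proj_ofList_of_perm {n : ℕ} {l : List (Fin n)} (h : l.Perm (List.finRange n)) :
    proj n (FreeMonoid.ofList l) = proj n (epsWord n) := by
  obtain ⟨σ, hσ⟩ := exists_permWord_eq_ofList h
  rw [← hσ]
  exact PresentedMonoid.mk_eq_mk_of_rel ⟨σ, rfl, rfl⟩

/-- With `t` the other letters, `x_i · (t x_i) = (x_i t) · x_i`, and both `t x_i` and `x_i t`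
represent `x_ε`. -/
lemma commute_proj_of_epsWord {n : ℕ} (i : Fin n) :
    Commute (proj n (FreeMonoid.of i)) (proj n (epsWord n)) := by
  set t := (List.finRange n).erase i
  have head_perm : (i :: t).Perm (List.finRange n) :=
    (List.perm_cons_erase (List.mem_finRange i)).symm
  have last_perm : (t ++ [i]).Perm (List.finRange n) :=
    (List.perm_append_singleton i t).trans head_perm
  calc proj n (FreeMonoid.of i) * proj n (epsWord n)
      = proj n (FreeMonoid.of i * FreeMonoid.ofList (t ++ [i])) := by
        rw [map_mul, proj_ofList_of_perm last_perm]
    _ = proj n (FreeMonoid.ofList (i :: t) * FreeMonoid.of i) := by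
        simp only [FreeMonoid.ofList_append, FreeMonoid.ofList_cons,
          FreeMonoid.ofList_nil, mul_one, mul_assoc]
    _ = proj n (epsWord n) * proj n (FreeMonoid.of i) := by
        rw [map_mul, proj_ofList_of_perm head_perm]

theorem epsWord_central_general (n : ℕ) :
    (∀ a : PresentedMonoid (symRel n),
        a * proj n (epsWord n) = proj n (epsWord n) * a) ∧
    (∀ i : Fin n,
        proj n (FreeMonoid.of i) * proj n (epsWord n) =
          proj n (epsWord n) * proj n (FreeMonoid.of i)) := by
  have generators_le : Submonoid.closure (Set.range (PresentedMonoid.of (symRel n))) ≤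
      Submonoid.centralizer {proj n (epsWord n)} :=
    Submonoid.closure_le.2 <| Set.range_subset_iff.2 fun i =>
      Submonoid.mem_centralizer_iff.2 fun _ hε => hε ▸ (commute_proj_of_epsWord i).symm.eq
  rw [PresentedMonoid.closure_range_of] at generators_le
  exact ⟨fun a => (Submonoid.mem_centralizer_iff.1 (generators_le trivial) _ rfl).symm,
    fun i => commute_proj_of_epsWord i⟩

/-- The element `x_ε = x_1 x_2 ⋯ x_n` is central in `S_n(Sym_n)`; in particular it commutes
with every generator `x_i`. -/
theorem epsWord_central (n : ℕ) (hn : 1 ≤ n) :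
    (∀ a : PresentedMonoid (symRel n),
        a * proj n (epsWord n) = proj n (epsWord n) * a) ∧
    (∀ i : Fin n,
        proj n (FreeMonoid.of i) * proj n (epsWord n) =
          proj n (epsWord n) * proj n (FreeMonoid.of i)) :=
  epsWord_central_general n
end

section
/- Let n ≥ 1 and let S_n(Sym_n) be the monoid presented by generators x_1,…,x_n and relations x_{σ(1)}x_{σ(2)}⋯x_{σ(n)} = x_1x_2⋯x_n for all σ ∈ Sym_n. Let u be a word in the free monoid on x_1,…,x_n that contains a subword of the form x_{σ(1)}x_{σ(2)}⋯x_{σ(n)} for some σ ∈ Sym_n. Then in S_n(Sym_n) one has u = x_1^{m_1}·x_ε·x_2^{m_2}⋯x_n^{m_n}, where x_ε = x_1x_2⋯x_n and for each i, m_i equals the number of occurrences of x_i in u minus 1 (in particular each m_i ≥ 0). -/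
/-!
Every rearrangement of `x_1 ⋯ x_n` equals `x_ε` in `S_n(Sym_n)`. Writing `x_ε` as `s · x_i` on
one side and `x_i · s` on the other shows that `x_ε` is central, and writing it as
`x_i x_j · r` and `r · x_j x_i` then gives `x_ε x_i x_j = x_ε x_j x_i`. So `x_ε · w` only
depends on the letter counts of `w`, and `a · x_σ · b = x_ε · a b` can be sorted into the
normal form.
-/

open List FreeMonoid

theorem proj_permWord {n : ℕ} (σ : Equiv.Perm (Fin n)) :
    proj n (permWord σ) = proj n (epsWord n) :=
  PresentedMonoid.mk_eq_mk_of_rel ⟨σ, rfl, rfl⟩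

theorem toList_permWord_perm_finRange {n : ℕ} (σ : Equiv.Perm (Fin n)) :
    (toList (permWord σ)).Perm (finRange n) := by
  simpa [permWord, ofFn_eq_map] using σ.map_finRange_perm

theorem count_toList_permWord {n : ℕ} (σ : Equiv.Perm (Fin n)) (i : Fin n) :
    (toList (permWord σ)).count i = 1 := by
  rw [(toList_permWord_perm_finRange σ).count_eq]
  exact count_eq_one_of_mem (nodup_finRange n) (mem_finRange i)

theorem exists_permWord_eq_of_perm_finRange {n : ℕ} {l : List (Fin n)}
    (h : l.Perm (finRange n)) : ∃ σ : Equiv.Perm (Fin n), permWord σ = ofList l := by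
  have hlen : l.length = n := by simpa using h.length_eq
  let e := (h.nodup_iff.mpr (nodup_finRange n)).getEquivOfForallMemList l
    fun x => h.mem_iff.mpr (mem_finRange x)
  exact ⟨(finCongr hlen.symm).trans e,
    congrArg ofList (ext_getElem (by simp [hlen]) fun _ _ _ => by simp [e])⟩

theorem proj_ofList_of_perm_finRange {n : ℕ} {l : List (Fin n)} (h : l.Perm (finRange n)) :
    proj n (ofList l) = proj n (epsWord n) := by
  obtain ⟨σ, hσ⟩ := exists_permWord_eq_of_perm_finRange h
  rw [← hσ, proj_permWord]

theorem commute_proj_epsWord {n : ℕ} (w : FreeMonoid (Fin n)) :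
    Commute (proj n w) (proj n (epsWord n)) := by
  have commute_of (i : Fin n) : Commute (proj n (of i)) (proj n (epsWord n)) := by
    have h : (i :: (finRange n).erase i).Perm (finRange n) :=
      (perm_cons_erase (mem_finRange i)).symm
    calc proj n (of i) * proj n (epsWord n)
        = proj n (of i) * proj n (ofList ((finRange n).erase i ++ [i])) := by
          rw [proj_ofList_of_perm_finRange ((perm_append_singleton _ _).trans h)]
      _ = proj n (ofList (i :: (finRange n).erase i)) * proj n (of i) := by
          simp only [← map_mul]; rfl
      _ = proj n (epsWord n) * proj n (of i) := by rw [proj_ofList_of_perm_finRange h]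
  induction w using FreeMonoid.inductionOn' with
  | one => simp
  | of_mul i w ih => rw [map_mul]; exact (commute_of i).mul_left ih

theorem proj_epsWord_mul_of_mul_of_comm {n : ℕ} (i j : Fin n) :
    proj n (epsWord n * of i * of j) = proj n (epsWord n * of j * of i) := by
  rcases eq_or_ne i j with rfl | hij
  · rfl
  set r := ((finRange n).erase i).erase j
  have h : (i :: j :: r).Perm (finRange n) :=
    ((perm_cons_erase (mem_finRange i)).trans
      ((perm_cons_erase ((mem_erase_of_ne hij.symm).mpr (mem_finRange j))).cons i)).symm
  have h' : (r ++ [j, i]).Perm (finRange n) := perm_append_comm.trans ((Perm.swap i j r).trans h)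
  calc proj n (epsWord n * of i * of j)
      = proj n (of i * of j) * proj n (epsWord n) := by
        rw [mul_assoc, map_mul, (commute_proj_epsWord _).eq]
    _ = proj n (of i * of j) * proj n (ofList (r ++ [j, i])) := by
        rw [proj_ofList_of_perm_finRange h']
    _ = proj n (ofList (i :: j :: r)) * proj n (of j * of i) := by
        simp only [← map_mul]; rfl
    _ = proj n (epsWord n * of j * of i) := by
        rw [proj_ofList_of_perm_finRange h, ← map_mul, mul_assoc]

theorem proj_epsWord_mul_ofList_of_perm {n : ℕ} {l₁ l₂ : List (Fin n)} (h : l₁.Perm l₂) :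
    proj n (epsWord n * ofList l₁) = proj n (epsWord n * ofList l₂) := by
  induction h with
  | nil => rfl
  | cons a _ ih =>
      simp only [ofList_cons, map_mul, ← mul_assoc, ← (commute_proj_epsWord (of a)).eq]
        at ih ⊢
      rw [mul_assoc, ih, mul_assoc]
  | swap a b l =>
      simp only [ofList_cons, ← mul_assoc]
      rw [map_mul, proj_epsWord_mul_of_mul_of_comm, ← map_mul]
  | trans _ _ ih₁ ih₂ => exact ih₁.trans ih₂

theorem perm_flatMap_replicate_count {n : ℕ} (l : List (Fin n)) :
    l.Perm ((finRange n).flatMap fun i => replicate (l.count i) i) := by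
  rw [perm_iff_count]
  intro i
  rw [count_flatMap, ← Fin.sum_univ_def]
  simp [count_replicate]

theorem proj_normalWord {n : ℕ} (hn : 0 < n) (m : Fin n → ℕ) :
    proj n (normalWord n hn m) =
      proj n (epsWord n * ofList ((finRange n).flatMap fun i => replicate (m i) i)) := by
  have h : finRange n = ⟨0, hn⟩ :: (finRange n).drop 1 := by
    obtain ⟨k, rfl⟩ := Nat.exists_eq_add_of_lt hn
    simp [finRange_succ]
  rw [h, flatMap_cons, ofList_append, ← mul_assoc, normalWord, map_mul, map_mul,
    (commute_proj_epsWord _).eq, map_mul, map_mul]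

/-- If a word `u` contains a subword `x_{σ(1)}⋯x_{σ(n)}` for some `σ ∈ Sym_n`, then every
generator occurs in `u` at least once, and in `S_n(Sym_n)` one has
`u = x_1^{m_1} · x_ε · x_2^{m_2} ⋯ x_n^{m_n}` where `m_i` is the number of occurrences
of `x_i` in `u` minus 1. -/
theorem eq_normalWord_of_hasPermSubword (n : ℕ) (hn : 1 ≤ n) (u : FreeMonoid (Fin n))
    (hu : HasPermSubword u) :
    (∀ i : Fin n, 1 ≤ (FreeMonoid.toList u).count i) ∧
    proj n u =
      proj n (normalWord n hn (fun i => (FreeMonoid.toList u).count i - 1)) := by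
  obtain ⟨σ, a, b, rfl⟩ := hu
  have hcount (i : Fin n) :
      (toList (a * permWord σ * b)).count i = (toList (a * b)).count i + 1 := by
    simp only [toList_mul, count_append, count_toList_permWord]
    omega
  refine ⟨fun i => by rw [hcount]; omega, ?_⟩
  simp only [hcount, Nat.add_sub_cancel]
  calc proj n (a * permWord σ * b)
      = proj n a * proj n (epsWord n) * proj n b := by rw [map_mul, map_mul, proj_permWord]
    _ = proj n (epsWord n * ofList (toList (a * b))) := by
        rw [(commute_proj_epsWord a).eq, ofList_toList, map_mul, map_mul, mul_assoc]
    _ = _ := by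
        rw [proj_epsWord_mul_ofList_of_perm (perm_flatMap_replicate_count _), proj_normalWord]
end

section
/- Let n ≥ 1 and let S_n(Sym_n) be the monoid presented by generators x_1,…,x_n and relations x_{σ(1)}x_{σ(2)}⋯x_{σ(n)} = x_1x_2⋯x_n for all σ ∈ Sym_n. Let u be a word in the free monoid on x_1,…,x_n containing no subword of the form x_{σ(1)}x_{σ(2)}⋯x_{σ(n)} for any σ ∈ Sym_n. Then for all m_1,…,m_n ≥ 0, the element of S_n(Sym_n) represented by u is different from the element x_1^{m_1}·x_ε·x_2^{m_2}⋯x_n^{m_n}, where x_ε = x_1x_2⋯x_n. -/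
lemma epsWord_eq_permWord_one (n : ℕ) : epsWord n = permWord (1 : Equiv.Perm (Fin n)) := rfl

lemma hasPermSubword_mul_left {n : ℕ} {u : FreeMonoid (Fin n)} (v : FreeMonoid (Fin n))
    (h : HasPermSubword u) : HasPermSubword (v * u) := by
  obtain ⟨σ, a, b, rfl⟩ := h
  exact ⟨σ, v * a, b, by rw [mul_assoc, mul_assoc, mul_assoc]⟩

lemma hasPermSubword_mul_right {n : ℕ} {u : FreeMonoid (Fin n)} (v : FreeMonoid (Fin n))
    (h : HasPermSubword u) : HasPermSubword (u * v) := by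
  obtain ⟨σ, a, b, rfl⟩ := h
  exact ⟨σ, a, b * v, by rw [mul_assoc, mul_assoc]⟩

lemma key {n : ℕ} {u v : FreeMonoid (Fin n)} (h : conGen (symRel n) u v) :
    u = v ∨ (HasPermSubword u ∧ HasPermSubword v) := by
  induction h with
  | of a b hab =>
    obtain ⟨σ, rfl, rfl⟩ := hab
    exact Or.inr ⟨⟨σ, 1, 1, by simp⟩, ⟨1, 1, 1, by simp [epsWord_eq_permWord_one]⟩⟩
  | refl a => exact Or.inl rfl
  | symm _ ih => exact ih.imp Eq.symm And.symm
  | trans h1 h2 ih1 ih2 =>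
    rcases ih1 with rfl | ⟨ha, hb⟩
    · exact ih2
    · rcases ih2 with rfl | ⟨_, hc⟩
      · exact Or.inr ⟨ha, hb⟩
      · exact Or.inr ⟨ha, hc⟩
  | mul h1 h2 ih1 ih2 =>
    rcases ih1 with rfl | ⟨ha, hb⟩
    · rcases ih2 with rfl | ⟨hc, hd⟩
      · exact Or.inl rfl
      · exact Or.inr ⟨hasPermSubword_mul_left _ hc, hasPermSubword_mul_left _ hd⟩
    · exact Or.inr ⟨hasPermSubword_mul_right _ ha, hasPermSubword_mul_right _ hb⟩

lemma hasPermSubword_normalWord (n : ℕ) (h : 0 < n) (m : Fin n → ℕ) :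
    HasPermSubword (normalWord n h m) := by
  exact ⟨1, FreeMonoid.ofList (List.replicate (m ⟨0, h⟩) ⟨0, h⟩),
    FreeMonoid.ofList (((List.finRange n).drop 1).flatMap fun i => List.replicate (m i) i),
    by rw [normalWord, epsWord_eq_permWord_one]⟩

/-- A word with no subword of the form `x_{σ(1)}⋯x_{σ(n)}` never represents the same element
of `S_n(Sym_n)` as a word `x_1^{m_1} · x_ε · x_2^{m_2} ⋯ x_n^{m_n}`. -/
theorem proj_ne_normalWord_of_no_subword (n : ℕ) (hn : 1 ≤ n) (u : FreeMonoid (Fin n))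
    (hu : ¬ HasPermSubword u) (m : Fin n → ℕ) :
    proj n u ≠ proj n (normalWord n hn m) := by
  intro h
  have hc : conGen (symRel n) u (normalWord n hn m) := Quotient.exact h
  rcases key hc with rfl | ⟨ha, _⟩
  · exact hu (hasPermSubword_normalWord n hn m)
  · exact hu ha
end

section
/- Let n ≥ 1, let k be a field, let k⟨X⟩ be the free associative algebra over k on x_1,…,x_n, and let I be the two-sided ideal generated by { x_{σ(1)}⋯x_{σ(n)} − x_1⋯x_n : σ ∈ Sym_n }. Then the images in k⟨X⟩/I of the elements x_1^{m_1}·x_ε·x_2^{m_2}⋯x_n^{m_n}, as (m_1,…,m_n) ranges over ℕ^n, are k-linearly independent, where x_ε = x_1x_2⋯x_n. -/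
/-- The monomial of `k⟨X⟩` corresponding to a word `w` in the generators. -/
noncomputable def wordElem (k : Type) [Field k] {n : ℕ} (w : List (Fin n)) :
    FreeAlgebra k (Fin n) :=
  (w.map (FreeAlgebra.ι k)).prod

/-- The monomial `x_ε = x_1 x_2 ⋯ x_n` of `k⟨X⟩`. -/
noncomputable def epsElem (k : Type) [Field k] (n : ℕ) : FreeAlgebra k (Fin n) :=
  wordElem k (List.ofFn fun i : Fin n => i)

/-- The set `{ x_{σ(1)} ⋯ x_{σ(n)} − x_1 ⋯ x_n : σ ∈ Sym_n }`. -/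
noncomputable def relSet (k : Type) [Field k] (n : ℕ) : Set (FreeAlgebra k (Fin n)) :=
  { p | ∃ σ : Equiv.Perm (Fin n),
      p = wordElem k (List.ofFn fun i => σ i) - epsElem k n }

/-- The defining relations, as a binary relation on `k⟨X⟩` (`RingQuot` of this relation is
the quotient of `k⟨X⟩` by the two-sided ideal generated by the corresponding differences). -/
def algRel (k : Type) [Field k] (n : ℕ) :
    FreeAlgebra k (Fin n) → FreeAlgebra k (Fin n) → Prop :=
  fun a b => ∃ σ : Equiv.Perm (Fin n),
    a = wordElem k (List.ofFn fun i => σ i) ∧ b = epsElem k n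

/-- The word `x_1^{m_1} · x_ε · x_2^{m_2} ⋯ x_n^{m_n}` as a list of generators. -/
def normalList (n : ℕ) (h : 0 < n) (m : Fin n → ℕ) : List (Fin n) :=
  List.replicate (m ⟨0, h⟩) ⟨0, h⟩ ++ List.ofFn (fun i : Fin n => i) ++
    ((List.finRange n).drop 1).flatMap fun i => List.replicate (m i) i

/-!
Abelianization: the algebra map `k⟨X⟩ → k[x_1, …, x_n]` with `x_i ↦ x_i` sends a word to the
monomial recording how often each letter occurs. A permuted word has the same letters as `x_ε`, so
the map kills `I` and factors through `k⟨X⟩/I`. The normal word indexed by `m` contains the letter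
`x_j` exactly `m_j + 1` times, so these words go to pairwise distinct monomials, which are linearly
independent.
-/

open MvPolynomial

theorem List.count_flatMap_replicate {α : Type*} [DecidableEq α] (l : List α) (m : α → ℕ)
    (a : α) : (l.flatMap fun i => List.replicate (m i) i).count a = l.count a * m a := by
  induction l with
  | nil => simp
  | cons b l ih =>
    rw [List.flatMap_cons, List.count_append, ih, List.count_replicate, List.count_cons]
    by_cases h : b = a <;> simp [h, add_mul, add_comm]

theorem FreeAlgebra.lift_X_prod_map_ι {R ι : Type*} [CommSemiring R] [DecidableEq ι]
    (l : List ι) :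
    FreeAlgebra.lift R (X : ι → MvPolynomial ι R) (l.map (FreeAlgebra.ι R)).prod =
      monomial (Multiset.toFinsupp (l : Multiset ι)) 1 := by
  induction l with
  | nil => simp
  | cons a l ih =>
    rw [List.map_cons, List.prod_cons, map_mul, ih, FreeAlgebra.lift_ι_apply, ← Multiset.cons_coe,
      ← Multiset.singleton_add, Multiset.toFinsupp_add, Multiset.toFinsupp_singleton, X,
      monomial_mul, one_mul]

theorem count_normalList (n : ℕ) (h : 0 < n) (m : Fin n → ℕ) (j : Fin n) :
    (normalList n h m).count j = m j + 1 := by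
  have hfin : (⟨0, h⟩ : Fin n) :: (List.finRange n).drop 1 = List.finRange n := by
    cases n with
    | zero => cases h
    | succ n => rw [List.finRange_succ]; rfl
  have hsplit := congrArg (fun l => (l.flatMap fun i => List.replicate (m i) i).count j) hfin
  rw [List.flatMap_cons, List.count_append, List.count_flatMap_replicate (List.finRange n),
    List.count_finRange, one_mul] at hsplit
  have hε : List.ofFn (fun i : Fin n => i) = List.finRange n := List.ofFn_id n
  rw [normalList, List.count_append, List.count_append, add_right_comm, hsplit, hε,
    List.count_finRange]

theorem lift_X_eq_of_algRel (k : Type) [Field k] (n : ℕ) ⦃a b : FreeAlgebra k (Fin n)⦄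
    (hab : algRel k n a b) :
    FreeAlgebra.lift k (X : Fin n → MvPolynomial (Fin n) k) a = FreeAlgebra.lift k X b := by
  obtain ⟨σ, rfl, rfl⟩ := hab
  rw [epsElem, wordElem, wordElem, FreeAlgebra.lift_X_prod_map_ι, FreeAlgebra.lift_X_prod_map_ι]
  congr 3
  exact Multiset.coe_eq_coe.mpr (σ.ofFn_comp_perm id)

/-- The images in `k⟨X⟩/I` of the elements `x_1^{m_1} · x_ε · x_2^{m_2} ⋯ x_n^{m_n}`,
`(m_1, …, m_n) ∈ ℕ^n`, are `k`-linearly independent. -/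
theorem normal_monomials_linearIndependent (n : ℕ) (hn : 1 ≤ n) (k : Type) [Field k] :
    LinearIndependent k (fun m : Fin n → ℕ =>
      RingQuot.mkAlgHom k (algRel k n) (wordElem k (normalList n hn m))) := by
  let ψ := RingQuot.liftAlgHom k ⟨FreeAlgebra.lift k X, lift_X_eq_of_algRel k n⟩
  have hψ (m : Fin n → ℕ) :
      ψ (RingQuot.mkAlgHom k (algRel k n) (wordElem k (normalList n hn m))) =
        basisMonomials (Fin n) k (Multiset.toFinsupp (normalList n hn m)) := by
    rw [RingQuot.liftAlgHom_mkAlgHom_apply, wordElem, FreeAlgebra.lift_X_prod_map_ι,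
      coe_basisMonomials]
  have hinj : Function.Injective fun m : Fin n → ℕ =>
      Multiset.toFinsupp (normalList n hn m : Multiset (Fin n)) :=
    fun a b hab => funext fun j => by
      simpa [count_normalList] using DFunLike.congr_fun hab j
  refine LinearIndependent.of_comp ψ.toLinearMap ?_
  rw [show ψ.toLinearMap ∘ _ = _ from funext hψ]
  exact (basisMonomials (Fin n) k).linearIndependent.comp _ hinj
end

section
/- Let n ≥ 2, let k be a field, let k⟨X⟩ be the free associative algebra over k on x_1,…,x_n, and let I be the two-sided ideal generated by { x_{σ(1)}⋯x_{σ(n)} − x_1⋯x_n : σ ∈ Sym_n }. Then for every m ≥ 1 and every i with 2 ≤ i ≤ n, the element x_i·x_1^m·x_ε − x_1^m·x_ε·x_i belongs to I, where x_ε = x_1x_2⋯x_n. -/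
/-!
Modulo the ideal, every rearrangement of the word `x_ε` equals `x_ε`. Writing `x_ε ≡ x_j u ≡ u x_j`
shows that `x_ε` commutes with every generator, and writing `x_ε ≡ w x_b x_a` shows
`x_a x_b x_ε ≡ x_b x_a x_ε`. Hence `x_i x_ε` commutes with `x_1`, so with `x_1^m`, and the claim
follows by moving `x_ε` past `x_1^m` and `x_i`.
-/

noncomputable def permQuotMk (k : Type) [Field k] (n : ℕ) :
    FreeAlgebra k (Fin n) →+* (TwoSidedIdeal.span (relSet k n)).ringCon.Quotient :=
  (TwoSidedIdeal.span (relSet k n)).ringCon.mk'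

section PermutationRelations

variable {k : Type} [Field k] {n : ℕ}

local notation "π" => permQuotMk k n
local notation "x" => FreeAlgebra.ι k

theorem sub_mem_span_relSet_iff {a b : FreeAlgebra k (Fin n)} :
    a - b ∈ TwoSidedIdeal.span (relSet k n) ↔ π a = π b := by
  rw [← TwoSidedIdeal.rel_iff]
  exact (RingCon.eq _).symm

@[simp]
theorem wordElem_nil : wordElem k ([] : List (Fin n)) = 1 := rfl

@[simp]
theorem wordElem_cons (a : Fin n) (l : List (Fin n)) :
    wordElem k (a :: l) = x a * wordElem k l := by
  simp [wordElem]

@[simp]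
theorem wordElem_append (l₁ l₂ : List (Fin n)) :
    wordElem k (l₁ ++ l₂) = wordElem k l₁ * wordElem k l₂ := by
  simp [wordElem]

theorem permQuotMk_wordElem_of_perm {l : List (Fin n)} (hl : l.Perm (List.finRange n)) :
    π (wordElem k l) = π (epsElem k n) := by
  classical
  have hlen : l.length = n := by simpa using hl.length_eq
  let σ : Equiv.Perm (Fin n) := (finCongr hlen.symm).trans
    ((hl.nodup_iff.mpr (List.nodup_finRange n)).getEquivOfForallMemList l
      fun i => hl.mem_iff.mpr (List.mem_finRange i))
  have hσ : (List.ofFn fun i => σ i) = l :=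
    List.ext_getElem (by simp [hlen]) fun j _ _ => by simp [σ]
  rw [← sub_mem_span_relSet_iff, ← hσ]
  exact TwoSidedIdeal.subset_span ⟨σ, rfl⟩

theorem commute_permQuotMk_epsElem (j : Fin n) : Commute (π (x j)) (π (epsElem k n)) := by
  have hj : j ∈ List.finRange n := List.mem_finRange j
  have hleft := permQuotMk_wordElem_of_perm (k := k) (List.perm_cons_erase hj).symm
  have hright := permQuotMk_wordElem_of_perm (k := k)
    ((List.perm_append_singleton j _).trans (List.perm_cons_erase hj).symm)
  simp only [wordElem_cons, wordElem_append, wordElem_nil, mul_one, map_mul] at hleft hright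
  calc π (x j) * π (epsElem k n)
      = π (x j) * π (wordElem k ((List.finRange n).erase j)) * π (x j) := by
        rw [← hright, mul_assoc]
    _ = π (epsElem k n) * π (x j) := by rw [hleft]

theorem permQuotMk_mul_mul_epsElem_comm {a b : Fin n} (hab : a ≠ b) :
    π (x a) * π (x b) * π (epsElem k n) = π (x b) * π (x a) * π (epsElem k n) := by
  have ha : a ∈ List.finRange n := List.mem_finRange a
  have hb : b ∈ (List.finRange n).erase a :=
    (List.mem_erase_of_ne hab.symm).mpr (List.mem_finRange b)
  set c := ((List.finRange n).erase a).erase b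
  have habc : (a :: b :: c).Perm (List.finRange n) :=
    (((List.perm_cons_erase hb).symm).cons a).trans (List.perm_cons_erase ha).symm
  have hbac : (b :: a :: c).Perm (List.finRange n) := (List.Perm.swap a b c).trans habc
  have hcba : (c ++ [b, a]).Perm (List.finRange n) := List.perm_append_comm.trans hbac
  have e₁ := permQuotMk_wordElem_of_perm (k := k) habc
  have e₂ := permQuotMk_wordElem_of_perm (k := k) hbac
  have e₃ := permQuotMk_wordElem_of_perm (k := k) hcba
  simp only [wordElem_cons, wordElem_append, wordElem_nil, mul_one, map_mul] at e₁ e₂ e₃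
  calc π (x a) * π (x b) * π (epsElem k n)
      = π (x a) * (π (x b) * π (wordElem k c)) * (π (x b) * π (x a)) := by
        rw [← e₃]; simp only [mul_assoc]
    _ = π (x b) * (π (x a) * π (wordElem k c)) * (π (x b) * π (x a)) := by rw [e₁, e₂]
    _ = π (x b) * π (x a) * π (epsElem k n) := by rw [← e₃]; simp only [mul_assoc]

theorem commute_permQuotMk_mul_epsElem (a b : Fin n) :
    Commute (π (x a) * π (epsElem k n)) (π (x b)) := by
  rcases eq_or_ne a b with rfl | hab
  · exact (Commute.refl _).mul_left (commute_permQuotMk_epsElem a).symm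
  · calc π (x a) * π (epsElem k n) * π (x b)
        = π (x a) * π (x b) * π (epsElem k n) := by
          rw [mul_assoc, ← (commute_permQuotMk_epsElem b).eq, mul_assoc]
      _ = π (x b) * (π (x a) * π (epsElem k n)) := by
          rw [permQuotMk_mul_mul_epsElem_comm hab, mul_assoc]

end PermutationRelations

/-- For every `m ≥ 1` and every `i` with `2 ≤ i ≤ n` (0-indexed: `i.val ≠ 0`), the element
`x_i · x_1^m · x_ε − x_1^m · x_ε · x_i` lies in the two-sided ideal generated by the
permutation relations. -/
theorem xi_x1pow_eps_mem_span (n : ℕ) (hn : 2 ≤ n) (k : Type) [Field k]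
    (m : ℕ) (i : Fin n) :
    FreeAlgebra.ι k i * FreeAlgebra.ι k (⟨0, by omega⟩ : Fin n) ^ m * epsElem k n -
        FreeAlgebra.ι k (⟨0, by omega⟩ : Fin n) ^ m * epsElem k n * FreeAlgebra.ι k i ∈
      TwoSidedIdeal.span (relSet k n) := by
  set x₁ : Fin n := ⟨0, by omega⟩
  set π := permQuotMk k n
  rw [sub_mem_span_relSet_iff]
  simp only [map_mul, map_pow]
  calc π (FreeAlgebra.ι k i) * π (FreeAlgebra.ι k x₁) ^ m * π (epsElem k n)
      = π (FreeAlgebra.ι k i) * π (epsElem k n) * π (FreeAlgebra.ι k x₁) ^ m := by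
        rw [mul_assoc, ((commute_permQuotMk_epsElem x₁).pow_left m).eq, mul_assoc]
    _ = π (FreeAlgebra.ι k x₁) ^ m * π (FreeAlgebra.ι k i) * π (epsElem k n) := by
        rw [((commute_permQuotMk_mul_epsElem i x₁).pow_right m).eq, mul_assoc]
    _ = π (FreeAlgebra.ι k x₁) ^ m * π (epsElem k n) * π (FreeAlgebra.ι k i) := by
        rw [mul_assoc, (commute_permQuotMk_epsElem i).eq, mul_assoc]
end
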